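/- arXiv:hep-th/9711066 — 4 statements merged into one kernel-verified Lean document; each statement's English description precedes it below -/
import Mathlib

section
/- Let t and t̃ be two unit future-pointing timelike vectors in Minkowski space (signature (+,-,-,-)), and set c = t̃·t + √((t̃·t)² − 1). Then for every nonzero null future-pointing vector l one has c⁻¹ ≤ (t̃·l)/(t·l) ≤ c. -/
/-- Minkowski scalar product on ℝ⁴ with signature (+,-,-,-). -/
def mdot (a b : Fin 4 → ℝ) : ℝ :=
  a 0 * b 0 - a 1 * b 1 - a 2 * b 2 - a 3 * b 3

lemma ortho_null (v l : Fin 4 → ℝ) (hl : mdot l l = 0) (hl0 : 0 < l 0)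
    (h : mdot v l = 0) : mdot v v ≤ 0 := by
  unfold mdot at *
  have e1 : v 0 * l 0 = v 1 * l 1 + v 2 * l 2 + v 3 * l 3 := by linarith
  have e2 : l 0 * l 0 = l 1 * l 1 + l 2 * l 2 + l 3 * l 3 := by linarith
  have h1 : (v 0 * l 0) ^ 2 ≤ (v 1 ^ 2 + v 2 ^ 2 + v 3 ^ 2) * (l 0 * l 0) := by
    rw [e1, e2]
    nlinarith [sq_nonneg (v 1 * l 2 - v 2 * l 1), sq_nonneg (v 1 * l 3 - v 3 * l 1),
      sq_nonneg (v 2 * l 3 - v 3 * l 2)]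
  have h2 : v 0 ^ 2 ≤ v 1 ^ 2 + v 2 ^ 2 + v 3 ^ 2 := by
    nlinarith [h1, mul_pos hl0 hl0]
  nlinarith [h2]

lemma pos_tl (t l : Fin 4 → ℝ) (ht : mdot t t = 1) (ht0 : 0 < t 0)
    (hl : mdot l l = 0) (hl0 : 0 < l 0) : 0 < mdot t l := by
  unfold mdot at *
  nlinarith [sq_nonneg (t 1 * l 2 - t 2 * l 1), sq_nonneg (t 1 * l 3 - t 3 * l 1),
    sq_nonneg (t 2 * l 3 - t 3 * l 2), mul_pos ht0 hl0, mul_pos hl0 hl0,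
    sq_nonneg (t 0 * l 0 - t 1 * l 1 - t 2 * l 2 - t 3 * l 3)]

lemma dd_ge_one (t t' : Fin 4 → ℝ) (ht : mdot t t = 1) (ht' : mdot t' t' = 1)
    (ht0 : 0 < t 0) (ht'0 : 0 < t' 0) : 1 ≤ mdot t' t := by
  unfold mdot at *
  nlinarith [sq_nonneg (t 1 * t' 2 - t 2 * t' 1), sq_nonneg (t 1 * t' 3 - t 3 * t' 1),
    sq_nonneg (t 2 * t' 3 - t 3 * t' 2), mul_pos ht0 ht'0,
    sq_nonneg (t 1 - t' 1), sq_nonneg (t 2 - t' 2), sq_nonneg (t 3 - t' 3)]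

lemma abstract_bound (a b d : ℝ) (ha : 0 < a) (hb : 0 < b) (hd1 : 1 ≤ d)
    (key : b ^ 2 + a ^ 2 ≤ 2 * d * a * b) :
    (d + Real.sqrt (d ^ 2 - 1))⁻¹ ≤ b / a ∧ b / a ≤ d + Real.sqrt (d ^ 2 - 1) := by
  have hs0 : 0 ≤ Real.sqrt (d ^ 2 - 1) := Real.sqrt_nonneg _
  have hs2 : Real.sqrt (d ^ 2 - 1) ^ 2 = d ^ 2 - 1 := Real.sq_sqrt (by nlinarith)
  set s := Real.sqrt (d ^ 2 - 1) with hs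
  have hc : 0 < d + s := by linarith
  constructor
  · rw [le_div_iff₀ ha, inv_mul_le_iff₀ hc]
    nlinarith [key, hs2, mul_nonneg hs0 hb.le]
  · rw [div_le_iff₀ ha]
    nlinarith [key, hs2, mul_nonneg hs0 ha.le]

/-- For two unit future-pointing timelike vectors `t`, `t'` and
`c = t'·t + √((t'·t)² − 1)`, every nonzero null future-pointing vector `l`
satisfies `c⁻¹ ≤ (t'·l)/(t·l) ≤ c`. -/
theorem null_ratio_bound (t t' l : Fin 4 → ℝ)
    (ht : mdot t t = 1) (ht' : mdot t' t' = 1)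
    (ht0 : 0 < t 0) (ht'0 : 0 < t' 0)
    (hl : mdot l l = 0) (hl0 : 0 < l 0) (hlne : l ≠ 0) :
    (mdot t' t + Real.sqrt ((mdot t' t) ^ 2 - 1))⁻¹ ≤ mdot t' l / mdot t l ∧
      mdot t' l / mdot t l ≤ mdot t' t + Real.sqrt ((mdot t' t) ^ 2 - 1) := by
  have ha : 0 < mdot t l := pos_tl t l ht ht0 hl hl0
  have hb : 0 < mdot t' l := pos_tl t' l ht' ht'0 hl hl0
  have hd1 : 1 ≤ mdot t' t := dd_ge_one t t' ht ht' ht0 ht'0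
  have key : (mdot t' l) ^ 2 + (mdot t l) ^ 2 ≤ 2 * mdot t' t * mdot t l * mdot t' l := by
    have horth : mdot (fun i => mdot t' l * t i - mdot t l * t' i) l = 0 := by
      unfold mdot; ring
    have h := ortho_null (fun i => mdot t' l * t i - mdot t l * t' i) l hl hl0 horth
    have hvv : mdot (fun i => mdot t' l * t i - mdot t l * t' i)
        (fun i => mdot t' l * t i - mdot t l * t' i) =
        (mdot t' l) ^ 2 * mdot t t - 2 * mdot t' t * mdot t l * mdot t' l
          + (mdot t l) ^ 2 * mdot t' t' := by
      unfold mdot; ring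
    rw [hvv, ht, ht'] at h
    linarith
  exact abstract_bound (mdot t l) (mdot t' l) (mdot t' t) ha hb hd1 key
end

section
/- The entrywise exponential of a positive semidefinite Hermitian n×n complex matrix is positive semidefinite: if A is Hermitian positive semidefinite, then the matrix with entries exp(A_{ik}) is also Hermitian positive semidefinite. -/
/-!
Every Hadamard power `A ⊙ ⋯ ⊙ A` of a positive semidefinite matrix is positive semidefinite by
the Schur product theorem, and `exp z = ∑ zᵐ / m!` has nonnegative coefficients. So the entrywise
exponential is a limit of nonnegative combinations of positive semidefinite matrices, and these
form a closed set.
-/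

open scoped ComplexOrder

namespace Matrix

variable {ι 𝕜 : Type*} [RCLike 𝕜]

theorem isClosed_setOf_posSemidef : IsClosed {A : Matrix ι ι 𝕜 | A.PosSemidef} := by
  have hset : {A : Matrix ι ι 𝕜 | A.PosSemidef} = {A | Aᴴ = A} ∩
      ⋂ x : ι →₀ 𝕜, {A | 0 ≤ x.sum fun i xi => x.sum fun j xj => star xi * A i j * xj} := by
    ext; simp [PosSemidef, IsHermitian]
  rw [hset]
  refine (isClosed_eq continuous_id.matrix_conjTranspose continuous_id).inter
    (isClosed_iInter fun x => isClosed_le continuous_const ?_)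
  unfold Finsupp.sum
  fun_prop

theorem PosSemidef.map_pow {A : Matrix ι ι 𝕜} (hA : A.PosSemidef) (m : ℕ) :
    (A.map (· ^ m)).PosSemidef := by
  induction m with
  | zero =>
    have hones :
        A.map (· ^ 0) = (1 : Matrix Unit Unit 𝕜).submatrix (fun _ => ()) (fun _ => ()) := by
      ext; simp
    rw [hones]
    exact PosSemidef.one.submatrix _
  | succ m ih =>
    have hsucc : A.map (· ^ (m + 1)) = A.map (· ^ m) ⊙ A := by ext; simp [pow_succ]
    rw [hsucc]
    exact ih.hadamard hA

theorem PosSemidef.map_of_hasSum {A : Matrix ι ι 𝕜} (hA : A.PosSemidef) {c : ℕ → ℝ}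
    (hc : ∀ m, 0 ≤ c m) {f : 𝕜 → 𝕜} (hf : ∀ z, HasSum (fun m => c m • z ^ m) (f z)) :
    (A.map f).PosSemidef := by
  have hsum : HasSum (fun m => c m • A.map (· ^ m)) (A.map f) :=
    Pi.hasSum.2 fun i => Pi.hasSum.2 fun j => hf (A i j)
  refine isClosed_setOf_posSemidef.mem_of_tendsto hsum.tendsto_sum_nat (.of_forall fun s => ?_)
  exact posSemidef_sum _ fun m _ => (hA.map_pow m).smul (hc m)

end Matrix

/-- The entrywise exponential of a positive semidefinite Hermitian complex matrix
is positive semidefinite. -/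
theorem entrywise_exp_posSemidef {n : ℕ} (A : Matrix (Fin n) (Fin n) ℂ)
    (hA : A.PosSemidef) :
    (Matrix.of fun i k => Complex.exp (A i k)).PosSemidef :=
  hA.map_of_hasSum (c := fun m => (m.factorial⁻¹ : ℝ)) (fun m => by positivity) fun z => by
    rw [Complex.exp_eq_exp_ℂ]
    exact NormedSpace.exp_series_hasSum_exp' z
end

section
/- For z = x + iy with x ∈ ℝ⁴ and y in the closed forward lightcone of Minkowski space, and for any unit future-pointing timelike vector t and nonzero null future-pointing vector l, the following inequalities hold: 1 ≤ (1 + y⁰ − |ȳ|)² + θ(x·x)(|x⁰| − |x̄|)² ≤ |1 − i z·l/(t·l)|² ≤ (1 + y⁰ + |ȳ|)² + (|x⁰| + |x̄|)², where y⁰ = y·t, |ȳ| = √((y·t)² − y·y) (similarly for x), and θ is the Heaviside step function. -/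
/-!
For any vector `a`, the vector `w = (t·l) a − (a·l) t` is orthogonal to the null vector `l`, hence
not timelike, and expanding `w·w ≤ 0` gives `(a·l/(t·l) − a⁰)² ≤ |ā|²`. So `y·l/(t·l)` and
`x·l/(t·l)` lie within `|ȳ|` of `y⁰` and within `|x̄|` of `x⁰` respectively, and all the bounds
follow by squaring these interval estimates; the lower one for `x` needs `|x̄| ≤ |x⁰|`, i.e. `x·x ≥ 0`.
-/

lemma mdot_self_nonpos_of_orthogonal_null {l w : Fin 4 → ℝ} (hl : mdot l l = 0)
    (hl0 : l 0 ≠ 0) (hw : mdot w l = 0) : mdot w w ≤ 0 := by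
  simp only [mdot] at *
  have hw0 : w 0 * l 0 = w 1 * l 1 + w 2 * l 2 + w 3 * l 3 := by linarith
  have cauchy_schwarz : (w 1 * l 1 + w 2 * l 2 + w 3 * l 3) ^ 2
      ≤ (w 1 ^ 2 + w 2 ^ 2 + w 3 ^ 2) * (l 1 ^ 2 + l 2 ^ 2 + l 3 ^ 2) := by
    nlinarith [sq_nonneg (w 1 * l 2 - w 2 * l 1), sq_nonneg (w 1 * l 3 - w 3 * l 1),
      sq_nonneg (w 2 * l 3 - w 3 * l 2)]
  have hl_spatial : l 1 ^ 2 + l 2 ^ 2 + l 3 ^ 2 = l 0 ^ 2 := by linarith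
  rw [← hw0, hl_spatial, mul_pow] at cauchy_schwarz
  have := le_of_mul_le_mul_right cauchy_schwarz (sq_pos_of_ne_zero hl0)
  linarith

lemma sq_mdot_div_sub_mdot_le {t l : Fin 4 → ℝ} (ht : mdot t t = 1) (hl : mdot l l = 0)
    (hl0 : l 0 ≠ 0) (htl : mdot t l ≠ 0) (a : Fin 4 → ℝ) :
    (mdot a l / mdot t l - mdot a t) ^ 2 ≤ mdot a t ^ 2 - mdot a a := by
  set w : Fin 4 → ℝ := fun i => mdot t l * a i - mdot a l * t i
  have hw : mdot w w ≤ 0 :=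
    mdot_self_nonpos_of_orthogonal_null hl hl0 (by simp only [w, mdot]; ring)
  have hww : mdot w w = mdot t l ^ 2 * mdot a a
      - 2 * mdot t l * mdot a l * mdot a t + mdot a l ^ 2 * mdot t t := by
    simp only [w, mdot]; ring
  rw [ht, mul_one] at hww
  have hsq : (mdot a l / mdot t l - mdot a t) ^ 2
      = (mdot a l - mdot a t * mdot t l) ^ 2 / mdot t l ^ 2 := by
    field_simp
  rw [hsq, div_le_iff₀ (by positivity)]
  linarith

lemma sqrt_sq_sub_le_abs {q : ℝ} (p : ℝ) (hq : 0 ≤ q) : √(p ^ 2 - q) ≤ |p| :=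
  (Real.sqrt_le_sqrt (by linarith)).trans_eq (Real.sqrt_sq_eq_abs p)

lemma sq_sub_le_sq_of_abs_sub_le {u p s : ℝ} (h : |u - p| ≤ s) (hsp : s ≤ p) :
    (p - s) ^ 2 ≤ u ^ 2 :=
  pow_le_pow_left₀ (sub_nonneg.2 hsp) (by linarith [(abs_le.1 h).1]) 2

lemma sq_le_sq_add_of_abs_sub_le {u p s : ℝ} (h : |u - p| ≤ s) (hp : 0 ≤ p) :
    u ^ 2 ≤ (p + s) ^ 2 := by
  obtain ⟨h₁, h₂⟩ := abs_le.1 h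
  exact sq_le_sq' (by linarith) (by linarith)

lemma norm_one_sub_I_mul_div_sq (X Y T : ℝ) :
    ‖1 - Complex.I * (((X : ℂ) + Complex.I * (Y : ℂ)) / (T : ℂ))‖ ^ 2
      = (1 + Y / T) ^ 2 + (X / T) ^ 2 := by
  have h : 1 - Complex.I * (((X : ℂ) + Complex.I * (Y : ℂ)) / (T : ℂ))
      = ((1 + Y / T : ℝ) : ℂ) + ((-(X / T) : ℝ) : ℂ) * Complex.I := by
    push_cast
    rw [add_div, mul_div_assoc]
    linear_combination (-(Y / T : ℂ)) * Complex.I_sq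
  rw [h, Complex.sq_norm, Complex.normSq_add_mul_I, neg_sq]

theorem lightcone_modulus_bounds_general (t l x y : Fin 4 → ℝ)
    (ht : mdot t t = 1)
    (hl : mdot l l = 0) (hl0 : 0 < l 0) (htl : 0 < mdot t l)
    (hyy : 0 ≤ mdot y y) (hyt : 0 ≤ mdot y t) :
    1 ≤ (1 + mdot y t - Real.sqrt ((mdot y t) ^ 2 - mdot y y)) ^ 2
        + (if 0 ≤ mdot x x then (1 : ℝ) else 0)
          * (|mdot x t| - Real.sqrt ((mdot x t) ^ 2 - mdot x x)) ^ 2 ∧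
    (1 + mdot y t - Real.sqrt ((mdot y t) ^ 2 - mdot y y)) ^ 2
        + (if 0 ≤ mdot x x then (1 : ℝ) else 0)
          * (|mdot x t| - Real.sqrt ((mdot x t) ^ 2 - mdot x x)) ^ 2
      ≤ ‖(1 - Complex.I *
          (((mdot x l : ℂ) + Complex.I * (mdot y l : ℂ)) / (mdot t l : ℂ)))‖ ^ 2 ∧
    ‖(1 - Complex.I *
          (((mdot x l : ℂ) + Complex.I * (mdot y l : ℂ)) / (mdot t l : ℂ)))‖ ^ 2
      ≤ (1 + mdot y t + Real.sqrt ((mdot y t) ^ 2 - mdot y y)) ^ 2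
        + (|mdot x t| + Real.sqrt ((mdot x t) ^ 2 - mdot x x)) ^ 2 := by
  rw [norm_one_sub_I_mul_div_sq]
  have hband a : |mdot a l / mdot t l - mdot a t| ≤ √(mdot a t ^ 2 - mdot a a) :=
    Real.abs_le_sqrt (sq_mdot_div_sub_mdot_le ht hl hl0.ne' htl.ne' a)
  have hy : |(1 + mdot y l / mdot t l) - (1 + mdot y t)| ≤ √(mdot y t ^ 2 - mdot y y) := by
    rw [add_sub_add_left_eq_sub]; exact hband y
  have hsy : √(mdot y t ^ 2 - mdot y y) ≤ mdot y t :=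
    (sqrt_sq_sub_le_abs _ hyy).trans_eq (abs_of_nonneg hyt)
  have hx : |(|mdot x l / mdot t l| - |mdot x t|)| ≤ √(mdot x t ^ 2 - mdot x x) :=
    (abs_abs_sub_abs_le_abs_sub _ _).trans (hband x)
  have hx_lower : (if 0 ≤ mdot x x then (1 : ℝ) else 0)
      * (|mdot x t| - √(mdot x t ^ 2 - mdot x x)) ^ 2 ≤ (mdot x l / mdot t l) ^ 2 := by
    split_ifs with hxx
    · rw [one_mul, ← sq_abs (mdot x l / mdot t l)]
      exact sq_sub_le_sq_of_abs_sub_le hx (sqrt_sq_sub_le_abs _ hxx)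
    · rw [zero_mul]; positivity
  have hx_upper : (mdot x l / mdot t l) ^ 2 ≤ (|mdot x t| + √(mdot x t ^ 2 - mdot x x)) ^ 2 :=
    sq_abs (mdot x l / mdot t l) ▸ sq_le_sq_add_of_abs_sub_le hx (abs_nonneg _)
  refine ⟨le_add_of_le_of_nonneg (one_le_pow₀ (by linarith)) (by positivity), ?_, ?_⟩
  · exact add_le_add (sq_sub_le_sq_of_abs_sub_le hy (by linarith)) hx_lower
  · exact add_le_add (sq_le_sq_add_of_abs_sub_le hy (by linarith)) hx_upper

/-- For `z = x + iy` with `y` in the closed forward lightcone, `t` a unit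
future-pointing timelike vector and `l` a nonzero null future-pointing vector:
`1 ≤ (1 + y⁰ − |ȳ|)² + θ(x·x)(|x⁰| − |x̄|)² ≤ |1 − i z·l/(t·l)|²
   ≤ (1 + y⁰ + |ȳ|)² + (|x⁰| + |x̄|)²`,
where `y⁰ = y·t`, `|ȳ| = √((y·t)² − y·y)` and similarly for `x`,
and `θ` is the Heaviside step function. -/
theorem lightcone_modulus_bounds (t l x y : Fin 4 → ℝ)
    (ht : mdot t t = 1) (ht0 : 0 < t 0)
    (hl : mdot l l = 0) (hl0 : 0 < l 0) (htl : 0 < mdot t l)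
    (hyy : 0 ≤ mdot y y) (hyt : 0 ≤ mdot y t) :
    1 ≤ (1 + mdot y t - Real.sqrt ((mdot y t) ^ 2 - mdot y y)) ^ 2
        + (if 0 ≤ mdot x x then (1 : ℝ) else 0)
          * (|mdot x t| - Real.sqrt ((mdot x t) ^ 2 - mdot x x)) ^ 2 ∧
    (1 + mdot y t - Real.sqrt ((mdot y t) ^ 2 - mdot y y)) ^ 2
        + (if 0 ≤ mdot x x then (1 : ℝ) else 0)
          * (|mdot x t| - Real.sqrt ((mdot x t) ^ 2 - mdot x x)) ^ 2
      ≤ ‖(1 - Complex.I *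
          (((mdot x l : ℂ) + Complex.I * (mdot y l : ℂ)) / (mdot t l : ℂ)))‖ ^ 2 ∧
    ‖(1 - Complex.I *
          (((mdot x l : ℂ) + Complex.I * (mdot y l : ℂ)) / (mdot t l : ℂ)))‖ ^ 2
      ≤ (1 + mdot y t + Real.sqrt ((mdot y t) ^ 2 - mdot y y)) ^ 2
        + (|mdot x t| + Real.sqrt ((mdot x t) ^ 2 - mdot x x)) ^ 2 :=
  lightcone_modulus_bounds_general t l x y ht hl hl0 htl hyy hyt
end

section
/- Let π_f be a representation of a *-algebra A on a Hilbert space H_f, let X be an abelian group with a real-valued symplectic bi-additive form {·,·}, and let β_x (x∈X) be automorphisms of A with β_xβ_y = β_{x+y}. Then the operators on ⊕_{x∈X} H_x (each H_x = H_f) defined by [π(W(y))ψ]_x = e^{(i/2){x,y}} ψ_{x−y} and [π(C)ψ]_x = π_f(β_{−x}C)ψ_x (C ∈ A) satisfy: π(W(y)) is unitary, π(W(x))π(W(y)) = e^{−(i/2){x,y}} π(W(x+y)), π(W(x))* = π(W(−x)), and π(W(x)) π(C) = π(β_x C) π(W(x)). -/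
open scoped ENNReal

set_option maxHeartbeats 2000000 in
/-- The covariant regular representation of the semidirect product of CCR and CAR:
on the ℓ²-direct sum `⊕_{x∈X} H_f`, operators defined by
`[π(W(y))ψ]_x = e^{(i/2){x,y}} ψ_{x−y}` and `[π(C)ψ]_x = π_f(β_{−x}C) ψ_x`
satisfy: each `π(W(y))` is unitary, the Weyl relations
`π(W(x))π(W(y)) = e^{−(i/2){x,y}} π(W(x+y))`, `π(W(x))* = π(W(−x))`, and the
covariance relation `π(W(x)) π(C) = π(β_x C) π(W(x))`. -/
theorem covariant_representation
    {X : Type*} [AddCommGroup X]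
    (σ : X → X → ℝ)
    (hσadd₁ : ∀ x y z : X, σ (x + y) z = σ x z + σ y z)
    (hσadd₂ : ∀ x y z : X, σ x (y + z) = σ x y + σ x z)
    (hσanti : ∀ x y : X, σ x y = -σ y x)
    {A : Type*} [Ring A] [StarRing A] [Algebra ℂ A] [StarModule ℂ A]
    (β : X → (A →⋆ₐ[ℂ] A))
    (hβ : ∀ x y : X, β (x + y) = (β x).comp (β y))
    {Hf : Type*} [NormedAddCommGroup Hf] [InnerProductSpace ℂ Hf] [CompleteSpace Hf]
    (πf : A →⋆ₐ[ℂ] (Hf →L[ℂ] Hf))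
    (W : X → (lp (fun _ : X => Hf) 2 →L[ℂ] lp (fun _ : X => Hf) 2))
    (P : A → (lp (fun _ : X => Hf) 2 →L[ℂ] lp (fun _ : X => Hf) 2))
    (hW : ∀ (y : X) (ψ : lp (fun _ : X => Hf) 2) (x : X),
      (W y ψ : ∀ _ : X, Hf) x
        = Complex.exp (Complex.I / 2 * (σ x y : ℝ)) • (ψ : ∀ _ : X, Hf) (x - y))
    (hP : ∀ (C : A) (ψ : lp (fun _ : X => Hf) 2) (x : X),
      (P C ψ : ∀ _ : X, Hf) x = πf (β (-x) C) ((ψ : ∀ _ : X, Hf) x)) :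
    (∀ (y : X) (ψ : lp (fun _ : X => Hf) 2), ‖W y ψ‖ = ‖ψ‖) ∧
    (∀ y : X, Function.Surjective (W y)) ∧
    (∀ x y : X,
      (W x).comp (W y)
        = Complex.exp (-(Complex.I / 2) * (σ x y : ℝ)) • W (x + y)) ∧
    (∀ x : X, ContinuousLinearMap.adjoint (W x) = W (-x)) ∧
    (∀ (x : X) (C : A), (W x).comp (P C) = (P (β x C)).comp (W x)) := by
  -- basic facts about σ
  have σ0₁ : ∀ y, σ 0 y = 0 := by
    intro y; have h := hσadd₁ 0 0 y; simp at h; linarith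
  have σ0₂ : ∀ x, σ x 0 = 0 := by
    intro x; rw [hσanti, σ0₁]; ring
  have σneg₁ : ∀ x y, σ (-x) y = -σ x y := by
    intro x y; have h := hσadd₁ x (-x) y; simp [σ0₁] at h; linarith
  have σneg₂ : ∀ x y, σ x (-y) = -σ x y := by
    intro x y; rw [hσanti, σneg₁, hσanti]; ring
  have σsub₁ : ∀ x y z, σ (x - y) z = σ x z - σ y z := by
    intro x y z; rw [sub_eq_add_neg, hσadd₁, σneg₁]; ring
  have σxx : ∀ x, σ x x = 0 := by
    intro x; have := hσanti x x; linarith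
  -- the phase factor has norm one
  have hexp : ∀ r : ℝ, ‖Complex.exp (Complex.I / 2 * (r : ℝ))‖ = 1 := by
    intro r
    rw [Complex.norm_exp]
    have : (Complex.I / 2 * (r : ℝ)).re = 0 := by simp [Complex.div_re]
    rw [this, Real.exp_zero]
  -- isometry
  have hnorm : ∀ (y : X) (ψ : lp (fun _ : X => Hf) 2), ‖W y ψ‖ = ‖ψ‖ := by
    intro y ψ
    have hp : (0 : ℝ) < (2 : ℝ≥0∞).toReal := by norm_num
    rw [lp.norm_eq_tsum_rpow hp, lp.norm_eq_tsum_rpow hp]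
    congr 1
    rw [← (Equiv.subRight y).tsum_eq
      (fun x => ‖(ψ : ∀ _ : X, Hf) x‖ ^ (2 : ℝ≥0∞).toReal)]
    refine tsum_congr fun x => ?_
    rw [hW, norm_smul, hexp, one_mul]
    rfl
  -- Weyl relations
  have hWeyl : ∀ x y : X,
      (W x).comp (W y)
        = Complex.exp (-(Complex.I / 2) * (σ x y : ℝ)) • W (x + y) := by
    intro x y
    ext ψ z
    have lhs : ((W x).comp (W y) ψ : ∀ _ : X, Hf) z
        = (Complex.exp (Complex.I / 2 * (σ z x : ℝ))
            * Complex.exp (Complex.I / 2 * (σ (z - x) y : ℝ)))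
            • (ψ : ∀ _ : X, Hf) (z - x - y) := by
      simp only [ContinuousLinearMap.comp_apply]
      rw [hW, hW, smul_smul]
    have rhs : ((Complex.exp (-(Complex.I / 2) * (σ x y : ℝ)) • W (x + y)) ψ
          : ∀ _ : X, Hf) z
        = (Complex.exp (-(Complex.I / 2) * (σ x y : ℝ))
            * Complex.exp (Complex.I / 2 * (σ z (x + y) : ℝ)))
            • (ψ : ∀ _ : X, Hf) (z - (x + y)) := by
      simp only [ContinuousLinearMap.smul_apply, lp.coeFn_smul, Pi.smul_apply]
      rw [hW, smul_smul]
    rw [lhs, rhs, sub_sub]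
    congr 1
    rw [← Complex.exp_add, ← Complex.exp_add]
    congr 1
    rw [σsub₁, hσadd₂]
    push_cast
    ring
  have hW0 : ∀ ψ, W 0 ψ = ψ := by
    intro ψ
    apply lp.ext
    funext z
    rw [hW, σ0₂]
    simp
  have hinv : ∀ (x : X) (ψ), W x (W (-x) ψ) = ψ := by
    intro x ψ
    have h := DFunLike.congr_fun (hWeyl x (-x)) ψ
    simp only [ContinuousLinearMap.comp_apply, ContinuousLinearMap.smul_apply] at h
    rw [σneg₂, σxx] at h
    simpa [hW0] using h
  refine ⟨hnorm, ?_, hWeyl, ?_, ?_⟩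
  · -- surjectivity
    intro y ψ
    exact ⟨W (-y) ψ, hinv y ψ⟩
  · -- adjoint
    intro x
    symm
    rw [ContinuousLinearMap.eq_adjoint_iff]
    intro u v
    have key : ∀ a b : lp (fun _ : X => Hf) 2,
        (inner ℂ (W x a) (W x b) : ℂ) = inner ℂ a b := by
      intro a b
      have h := LinearIsometry.inner_map_map
        (⟨(W x : _ →ₗ[ℂ] _), hnorm x⟩ :
          lp (fun _ : X => Hf) 2 →ₗᵢ[ℂ] lp (fun _ : X => Hf) 2) a b
      simp only [LinearIsometry.coe_mk, ContinuousLinearMap.coe_coe] at h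
      exact h
    rw [← key, hinv]
  · -- covariance
    intro x C
    ext ψ z
    simp only [ContinuousLinearMap.comp_apply]
    rw [hW, hP, hP, hW, map_smul]
    congr 2
    rw [neg_sub, sub_eq_neg_add, hβ]
    rfl
end
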